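/- arXiv:2404.14002 — 3 statements merged into one kernel-verified Lean document; each statement's English description precedes it below -/
import Mathlib

section
/- For every x ∈ X and every g ∈ Q_x there exists a unique point y ∈ X with the property that for all a, b ∈ P with g = ab⁻¹ one has θ_a(x) = θ_b(y). -/
/-! Two representations `g = a₀ b₀⁻¹ = a b⁻¹` have a common refinement: writing
`b⁻¹ b₀ = c d⁻¹` with `c, d ∈ P` gives `b₀ d = b c` and `a₀ d = a c`. Applying `θ_d` to
`θ_{a₀} x = θ_{b₀} y` therefore yields `θ_c (θ_a x) = θ_c (θ_b y)`, and injectivity of `θ_c`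
gives `θ_a x = θ_b y`. Uniqueness of `y` is injectivity of `θ_{b₀}`. -/

/-- `Q_x`: the set of `g ∈ G` expressible as `a * b⁻¹` with `a, b ∈ P` such that
`θ_a x = θ_b y` for some `y ∈ X`. -/
def Qset {G X : Type*} [Group G] (P : Set G) (θ : G → X → X) (x : X) : Set G :=
  {g : G | ∃ a ∈ P, ∃ b ∈ P, ∃ y : X, g = a * b⁻¹ ∧ θ a x = θ b y}

section RightAction

variable {G X : Type*} [Group G] {P : Set G}

theorem exists_mem_mul_eq_mul (hPG : ∀ g : G, ∃ a ∈ P, ∃ b ∈ P, g = a * b⁻¹) (b b₀ : G) :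
    ∃ c ∈ P, ∃ d ∈ P, b₀ * d = b * c := by
  obtain ⟨c, hc, d, hd, hcd⟩ := hPG (b⁻¹ * b₀)
  rw [eq_mul_inv_iff_mul_eq, mul_assoc, inv_mul_eq_iff_eq_mul] at hcd
  exact ⟨c, hc, d, hd, hcd⟩

theorem apply_eq_apply_of_mul_inv_eq {θ : G → X → X}
    (hPG : ∀ g : G, ∃ a ∈ P, ∃ b ∈ P, g = a * b⁻¹)
    (hθi : ∀ a ∈ P, Function.Injective (θ a))
    (hθm : ∀ a ∈ P, ∀ b ∈ P, ∀ x : X, θ a (θ b x) = θ (b * a) x)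
    {a₀ b₀ a b : G} (ha₀ : a₀ ∈ P) (hb₀ : b₀ ∈ P) (ha : a ∈ P) (hb : b ∈ P)
    (hab : a₀ * b₀⁻¹ = a * b⁻¹) {x y : X} (hxy : θ a₀ x = θ b₀ y) :
    θ a x = θ b y := by
  obtain ⟨c, hc, d, hd, hbd⟩ := exists_mem_mul_eq_mul hPG b b₀
  have hac : a₀ * d = a * c := by
    rw [mul_inv_eq_iff_eq_mul] at hab
    rw [hab, mul_assoc, hbd, ← mul_assoc, inv_mul_cancel_right]
  apply hθi c hc
  calc θ c (θ a x) = θ (a₀ * d) x := by rw [hθm c hc a ha, hac]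
    _ = θ d (θ b₀ y) := by rw [← hxy, hθm d hd a₀ ha₀]
    _ = θ c (θ b y) := by rw [hθm d hd b₀ hb₀, hbd, hθm c hc b hb]

end RightAction

theorem stmt_1_general {G : Type*} [Group G]
    {X : Type*}
    (P : Set G)
    (hPG : ∀ g : G, ∃ a ∈ P, ∃ b ∈ P, g = a * b⁻¹)
    (θ : G → X → X)
    (hθi : ∀ a ∈ P, Function.Injective (θ a))
    (hθm : ∀ a ∈ P, ∀ b ∈ P, ∀ x : X, θ a (θ b x) = θ (b * a) x) :
    ∀ x : X, ∀ g ∈ Qset P θ x,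
      ∃! y : X, ∀ a ∈ P, ∀ b ∈ P, g = a * b⁻¹ → θ a x = θ b y := by
  rintro x g ⟨a₀, ha₀, b₀, hb₀, y₀, rfl, hxy₀⟩
  refine ⟨y₀, fun a ha b hb hab => apply_eq_apply_of_mul_inv_eq hPG hθi hθm ha₀ hb₀ ha hb hab hxy₀,
    fun y hy => hθi b₀ hb₀ ?_⟩
  exact (hy a₀ ha₀ b₀ hb₀ rfl).symm.trans hxy₀

/-- for every `x ∈ X` and every `g ∈ Q_x` there is a unique `y ∈ X` such that
for all `a, b ∈ P` with `g = a * b⁻¹` one has `θ_a x = θ_b y`. -/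
theorem stmt_1 {G : Type*} [Group G] [Countable G]
    {X : Type*} [TopologicalSpace X] [CompactSpace X] [T2Space X]
    [SecondCountableTopology X]
    (P : Set G) (hP1 : (1 : G) ∈ P) (hPmul : ∀ a ∈ P, ∀ b ∈ P, a * b ∈ P)
    (hPG : ∀ g : G, ∃ a ∈ P, ∃ b ∈ P, g = a * b⁻¹)
    (θ : G → X → X)
    (hθc : ∀ a ∈ P, Continuous (θ a))
    (hθi : ∀ a ∈ P, Function.Injective (θ a))
    (hθ1 : θ 1 = id)
    (hθm : ∀ a ∈ P, ∀ b ∈ P, ∀ x : X, θ a (θ b x) = θ (b * a) x) :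
    ∀ x : X, ∀ g ∈ Qset P θ x,
      ∃! y : X, ∀ a ∈ P, ∀ b ∈ P, g = a * b⁻¹ → θ a x = θ b y :=
  stmt_1_general P hPG θ hθi hθm
end

section
/- Suppose both actions θ and ρ are topologically free and are continuously orbit equivalent via φ, a, b. Then b(φ(x), a(x, g)) = g for every (x, g) ∈ X ⋊ P, and a(φ⁻¹(y), b(y, h)) = h for every (y, h) ∈ Y ⋊ S. -/
/-!
At a point `x` where the action is free, `g ↦ u(x, g)` is injective on `Q_x`. Fix `g` and look at
`f(x) = b(φ(x), a(x, g))` on the open set `{x | g ∈ Q_x}`. At a free point `x`, both `g` and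
`f(x)` send `x` to `φ⁻¹(u(φ(x), a(x, g)))`, so `f(x) = g`. Since free points are dense and `f` is
continuous with values in a Hausdorff space, `f = g` everywhere. The second identity is the first
one for the inverse orbit equivalence `(φ⁻¹, b, a)`.
-/

theorem Continuous.eq_const_of_dense_of_isOpen {X Z : Type*} [TopologicalSpace X]
    [TopologicalSpace Z] [T2Space Z] {U D : Set X} (hU : IsOpen U) (hD : Dense D)
    {f : U → Z} (hf : Continuous f) {c : Z} (hc : ∀ z : U, z.1 ∈ D → f z = c) (z : U) :
    f z = c :=
  congrFun (Continuous.ext_on (hD.preimage hU.isOpenMap_subtype_val) hf continuous_const hc) z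

section Action

variable {G X : Type*} [Group G] {P : Set G} {θ : G → X → X} {u : X → G → X}

variable (P θ u) in
def IsFreePoint (x : X) : Prop :=
  ∀ g ∈ Qset P θ x, g ≠ 1 → u x g ≠ x

theorem isOpen_setOf_mem_Qset [TopologicalSpace X] (hθc : ∀ a ∈ P, Continuous (θ a))
    (hθopen : ∀ a ∈ P, IsOpen (Set.range (θ a))) (g : G) :
    IsOpen {x : X | g ∈ Qset P θ x} := by
  rw [isOpen_iff_forall_mem_open]
  rintro x ⟨c, hc, d, hd, y, hg, hxy⟩
  refine ⟨θ c ⁻¹' Set.range (θ d), ?_, (hθopen d hd).preimage (hθc c hc), y, hxy.symm⟩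
  rintro x' ⟨y', hy'⟩
  exact ⟨c, hc, d, hd, y', hg, hy'.symm⟩

theorem eq_of_apply_eq_of_isFreePoint (hθi : ∀ a ∈ P, Function.Injective (θ a))
    (hu : ∀ x : X, ∀ g ∈ Qset P θ x, ∀ a ∈ P, ∀ b ∈ P, g = a * b⁻¹ → θ a x = θ b (u x g))
    {x : X} (hx : IsFreePoint P θ u x) {a b : G} (ha : a ∈ P) (hb : b ∈ P)
    (h : θ a x = θ b x) : a = b := by
  have hmem : a * b⁻¹ ∈ Qset P θ x := ⟨a, ha, b, hb, x, rfl, h⟩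
  have hfix : u x (a * b⁻¹) = x :=
    hθi b hb ((hu x _ hmem a ha b hb rfl).symm.trans h)
  by_contra hne
  exact hx _ hmem (mul_inv_eq_one.not.mpr hne) hfix

/-- The Ore condition `G = P P⁻¹` lets two representations of elements of `Q_x` be brought to a
common denominator, reducing injectivity to `eq_of_apply_eq_of_isFreePoint`. -/
theorem injOn_Qset_of_isFreePoint (hPmul : ∀ a ∈ P, ∀ b ∈ P, a * b ∈ P)
    (hPG : ∀ g : G, ∃ a ∈ P, ∃ b ∈ P, g = a * b⁻¹)
    (hθi : ∀ a ∈ P, Function.Injective (θ a))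
    (hθm : ∀ a ∈ P, ∀ b ∈ P, ∀ x : X, θ a (θ b x) = θ (b * a) x)
    (hu : ∀ x : X, ∀ g ∈ Qset P θ x, ∀ a ∈ P, ∀ b ∈ P, g = a * b⁻¹ → θ a x = θ b (u x g))
    {x : X} (hx : IsFreePoint P θ u x) : Set.InjOn (u x) (Qset P θ x) := by
  intro g hg g' hg' heq
  obtain ⟨c₁, hc₁, d₁, hd₁, -, rfl, -⟩ := id hg
  obtain ⟨c₂, hc₂, d₂, hd₂, -, rfl, -⟩ := id hg'
  have h₁ := hu x _ hg c₁ hc₁ d₁ hd₁ rfl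
  have h₂ := hu x _ hg' c₂ hc₂ d₂ hd₂ rfl
  rw [← heq] at h₂
  obtain ⟨p, hp, q, hq, hpq⟩ := hPG (d₂⁻¹ * d₁)
  have hden : d₂ * p = d₁ * q := by
    rw [show p = d₂⁻¹ * d₁ * q by rw [hpq]; group]; group
  have hnum : c₂ * p = c₁ * q := by
    refine eq_of_apply_eq_of_isFreePoint hθi hu hx (hPmul _ hc₂ _ hp) (hPmul _ hc₁ _ hq) ?_
    rw [← hθm p hp c₂ hc₂, h₂, hθm p hp d₂ hd₂, hden, ← hθm q hq d₁ hd₁, ← h₁, hθm q hq c₁ hc₁]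
  calc c₁ * d₁⁻¹ = (c₁ * q) * (d₁ * q)⁻¹ := by group
    _ = (c₂ * p) * (d₂ * p)⁻¹ := by rw [hnum, hden]
    _ = c₂ * d₂⁻¹ := by group

theorem cocycle_comp_eq_of_dense_isFreePoint {H Y : Type*} [Group H] [TopologicalSpace G]
    [T2Space G] [TopologicalSpace H] [TopologicalSpace X] [TopologicalSpace Y]
    {S : Set H} {ρ : H → Y → Y} {v : Y → H → Y}
    (hPmul : ∀ a ∈ P, ∀ b ∈ P, a * b ∈ P) (hPG : ∀ g : G, ∃ a ∈ P, ∃ b ∈ P, g = a * b⁻¹)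
    (hθc : ∀ a ∈ P, Continuous (θ a)) (hθi : ∀ a ∈ P, Function.Injective (θ a))
    (hθm : ∀ a ∈ P, ∀ b ∈ P, ∀ x : X, θ a (θ b x) = θ (b * a) x)
    (hθopen : ∀ a ∈ P, IsOpen (Set.range (θ a)))
    (hu : ∀ x : X, ∀ g ∈ Qset P θ x, ∀ a ∈ P, ∀ b ∈ P, g = a * b⁻¹ → θ a x = θ b (u x g))
    (hfree : Dense {x : X | IsFreePoint P θ u x}) (φ : X ≃ₜ Y)
    {a : {q : X × G // q.2 ∈ Qset P θ q.1} → H} {b : {q : Y × H // q.2 ∈ Qset S ρ q.1} → G}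
    (hacont : Continuous a) (hbcont : Continuous b)
    (ha : ∀ p : {q : X × G // q.2 ∈ Qset P θ q.1},
      a p ∈ Qset S ρ (φ p.1.1) ∧ φ (u p.1.1 p.1.2) = v (φ p.1.1) (a p))
    (hb : ∀ q : {q : Y × H // q.2 ∈ Qset S ρ q.1},
      b q ∈ Qset P θ (φ.symm q.1.1) ∧ φ.symm (v q.1.1 q.1.2) = u (φ.symm q.1.1) (b q))
    (p : {q : X × G // q.2 ∈ Qset P θ q.1}) :
    b ⟨(φ p.1.1, a p), (ha p).1⟩ = p.1.2 := by
  obtain ⟨⟨x, g⟩, hg⟩ := p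
  let f : {x' : X // g ∈ Qset P θ x'} → G := fun z =>
    b ⟨(φ z.1, a ⟨(z.1, g), z.2⟩), (ha ⟨(z.1, g), z.2⟩).1⟩
  have hf : Continuous f :=
    hbcont.comp (Continuous.subtype_mk ((φ.continuous.comp continuous_subtype_val).prodMk
      (hacont.comp (Continuous.subtype_mk (continuous_subtype_val.prodMk continuous_const) _))) _)
  refine hf.eq_const_of_dense_of_isOpen (isOpen_setOf_mem_Qset hθc hθopen g) hfree ?_ ⟨x, hg⟩
  rintro ⟨x', hx'⟩ hx'free
  obtain ⟨hmem, hmove⟩ := hb ⟨(φ x', a ⟨(x', g), hx'⟩), (ha ⟨(x', g), hx'⟩).1⟩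
  rw [φ.symm_apply_apply] at hmem hmove
  have hsame : u x' g = u x' (f ⟨x', hx'⟩) := by
    rw [← φ.symm_apply_apply (u x' g), (ha ⟨(x', g), hx'⟩).2]
    exact hmove
  exact (injOn_Qset_of_isFreePoint hPmul hPG hθi hθm hu hx'free hx' hmem hsame).symm

end Action

theorem stmt_11_general {G H : Type*} [Group G] [Group H]
    [TopologicalSpace G] [DiscreteTopology G] [TopologicalSpace H] [DiscreteTopology H]
    {X Y : Type*} [TopologicalSpace X]
    [TopologicalSpace Y]
    (P : Set G) (hPmul : ∀ a ∈ P, ∀ b ∈ P, a * b ∈ P)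
    (hPG : ∀ g : G, ∃ a ∈ P, ∃ b ∈ P, g = a * b⁻¹)
    (S : Set H) (hSmul : ∀ a ∈ S, ∀ b ∈ S, a * b ∈ S)
    (hSH : ∀ h : H, ∃ a ∈ S, ∃ b ∈ S, h = a * b⁻¹)
    (θ : G → X → X)
    (hθc : ∀ a ∈ P, Continuous (θ a))
    (hθi : ∀ a ∈ P, Function.Injective (θ a))
    (hθm : ∀ a ∈ P, ∀ b ∈ P, ∀ x : X, θ a (θ b x) = θ (b * a) x)
    (hθopen : ∀ a ∈ P, IsOpen (Set.range (θ a)))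
    (ρ : H → Y → Y)
    (hρc : ∀ s ∈ S, Continuous (ρ s))
    (hρi : ∀ s ∈ S, Function.Injective (ρ s))
    (hρm : ∀ a ∈ S, ∀ b ∈ S, ∀ y : Y, ρ a (ρ b y) = ρ (b * a) y)
    (hρopen : ∀ s ∈ S, IsOpen (Set.range (ρ s)))
    (u : X → G → X)
    (hu : ∀ x : X, ∀ g ∈ Qset P θ x, ∀ a ∈ P, ∀ b ∈ P,
      g = a * b⁻¹ → θ a x = θ b (u x g))
    (v : Y → H → Y)
    (hv : ∀ y : Y, ∀ h ∈ Qset S ρ y, ∀ a ∈ S, ∀ b ∈ S,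
      h = a * b⁻¹ → ρ a y = ρ b (v y h))
    (hfreeX : Dense {x : X | ∀ g ∈ Qset P θ x, g ≠ 1 → u x g ≠ x})
    (hfreeY : Dense {y : Y | ∀ h ∈ Qset S ρ y, h ≠ 1 → v y h ≠ y})
    (φ : X ≃ₜ Y)
    (a : {q : X × G // q.2 ∈ Qset P θ q.1} → H)
    (b : {q : Y × H // q.2 ∈ Qset S ρ q.1} → G)
    (hacont : Continuous a) (hbcont : Continuous b)
    (ha : ∀ p : {q : X × G // q.2 ∈ Qset P θ q.1},
      a p ∈ Qset S ρ (φ p.1.1) ∧ φ (u p.1.1 p.1.2) = v (φ p.1.1) (a p))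
    (hb : ∀ q : {q : Y × H // q.2 ∈ Qset S ρ q.1},
      b q ∈ Qset P θ (φ.symm q.1.1) ∧ φ.symm (v q.1.1 q.1.2) = u (φ.symm q.1.1) (b q)) :
    (∀ p : {q : X × G // q.2 ∈ Qset P θ q.1},
      b ⟨(φ p.1.1, a p), (ha p).1⟩ = p.1.2) ∧
    (∀ q : {q : Y × H // q.2 ∈ Qset S ρ q.1},
      a ⟨(φ.symm q.1.1, b q), (hb q).1⟩ = q.1.2) :=
  ⟨cocycle_comp_eq_of_dense_isFreePoint hPmul hPG hθc hθi hθm hθopen hu hfreeX φ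
      hacont hbcont ha hb,
    cocycle_comp_eq_of_dense_isFreePoint hSmul hSH hρc hρi hρm hρopen hv hfreeY φ.symm
      hbcont hacont hb ha⟩

/-- for topologically free injective actions that are continuously orbit
equivalent via `(φ, a, b)`, `b(φ(x), a(x, g)) = g` and `a(φ⁻¹(y), b(y, h)) = h`. -/
theorem stmt_11 {G H : Type*} [Group G] [Countable G] [Group H] [Countable H]
    [TopologicalSpace G] [DiscreteTopology G] [TopologicalSpace H] [DiscreteTopology H]
    {X Y : Type*} [TopologicalSpace X] [CompactSpace X] [T2Space X]
    [SecondCountableTopology X]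
    [TopologicalSpace Y] [CompactSpace Y] [T2Space Y] [SecondCountableTopology Y]
    (P : Set G) (hP1 : (1 : G) ∈ P) (hPmul : ∀ a ∈ P, ∀ b ∈ P, a * b ∈ P)
    (hPG : ∀ g : G, ∃ a ∈ P, ∃ b ∈ P, g = a * b⁻¹)
    (S : Set H) (hS1 : (1 : H) ∈ S) (hSmul : ∀ a ∈ S, ∀ b ∈ S, a * b ∈ S)
    (hSH : ∀ h : H, ∃ a ∈ S, ∃ b ∈ S, h = a * b⁻¹)
    (θ : G → X → X)
    (hθc : ∀ a ∈ P, Continuous (θ a))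
    (hθi : ∀ a ∈ P, Function.Injective (θ a))
    (hθ1 : θ 1 = id)
    (hθm : ∀ a ∈ P, ∀ b ∈ P, ∀ x : X, θ a (θ b x) = θ (b * a) x)
    (hθopen : ∀ a ∈ P, IsOpen (Set.range (θ a)))
    (ρ : H → Y → Y)
    (hρc : ∀ s ∈ S, Continuous (ρ s))
    (hρi : ∀ s ∈ S, Function.Injective (ρ s))
    (hρ1 : ρ 1 = id)
    (hρm : ∀ a ∈ S, ∀ b ∈ S, ∀ y : Y, ρ a (ρ b y) = ρ (b * a) y)
    (hρopen : ∀ s ∈ S, IsOpen (Set.range (ρ s)))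
    (u : X → G → X)
    (hu : ∀ x : X, ∀ g ∈ Qset P θ x, ∀ a ∈ P, ∀ b ∈ P,
      g = a * b⁻¹ → θ a x = θ b (u x g))
    (v : Y → H → Y)
    (hv : ∀ y : Y, ∀ h ∈ Qset S ρ y, ∀ a ∈ S, ∀ b ∈ S,
      h = a * b⁻¹ → ρ a y = ρ b (v y h))
    (hfreeX : Dense {x : X | ∀ g ∈ Qset P θ x, g ≠ 1 → u x g ≠ x})
    (hfreeY : Dense {y : Y | ∀ h ∈ Qset S ρ y, h ≠ 1 → v y h ≠ y})
    (φ : X ≃ₜ Y)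
    (a : {q : X × G // q.2 ∈ Qset P θ q.1} → H)
    (b : {q : Y × H // q.2 ∈ Qset S ρ q.1} → G)
    (hacont : Continuous a) (hbcont : Continuous b)
    (ha : ∀ p : {q : X × G // q.2 ∈ Qset P θ q.1},
      a p ∈ Qset S ρ (φ p.1.1) ∧ φ (u p.1.1 p.1.2) = v (φ p.1.1) (a p))
    (hb : ∀ q : {q : Y × H // q.2 ∈ Qset S ρ q.1},
      b q ∈ Qset P θ (φ.symm q.1.1) ∧ φ.symm (v q.1.1 q.1.2) = u (φ.symm q.1.1) (b q)) :
    (∀ p : {q : X × G // q.2 ∈ Qset P θ q.1},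
      b ⟨(φ p.1.1, a p), (ha p).1⟩ = p.1.2) ∧
    (∀ q : {q : Y × H // q.2 ∈ Qset S ρ q.1},
      a ⟨(φ.symm q.1.1, b q), (hb q).1⟩ = q.1.2) :=
  stmt_11_general P hPmul hPG S hSmul hSH θ hθc hθi hθm hθopen ρ hρc hρi hρm hρopen u hu v hv hfreeX
    hfreeY φ a b hacont hbcont ha hb
end

section
/- Suppose both actions θ and ρ are topologically free and are continuously orbit equivalent via φ, a, b. Then the map Λ : X ⋊ P → Y ⋊ S, Λ(x, g) = (φ(x), a(x, g)), is a homeomorphism with inverse (y, h) ↦ (φ⁻¹(y), b(y, h)); it maps the unit space onto the unit space (a(x, e) = e for all x ∈ X); and it is multiplicative: whenever (x, g) ∈ X ⋊ P and (u(x, g), h) ∈ X ⋊ P, the pair Λ(x, g), Λ(u(x, g), h) is composable in Y ⋊ S (i.e., φ(u(x, g)) = u(φ(x), a(x, g))) and Λ(x, gh) = (φ(x), a(x, g) · a(u(x, g), h)). In other words, X ⋊ P and Y ⋊ S are isomorphic as étale topological groupoids. -/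
/-!
Topological freeness makes the orbit maps `u(·, g)` rigid: if `u(x, g) = u(x, g')` for all `x`
in a nonempty open set, then `g = g'`, since at a free point of that set `u(x, g g'⁻¹) = x`.
Continuous cocycles into a discrete group are locally constant, so each groupoid identity
(`b (φ x, a (x, g)) = g`, `a (x, 1) = 1`, `a (x, g h) = a (x, g) a (u (x, g), h)`) holds once both
sides act in the same way through `u` near a point, which the orbit equivalence relations
`φ (u (x, g)) = u (φ x, a (x, g))` provide.
-/

open Filter Topology Function

abbrev TransformationGroupoid {G X : Type*} [Group G] (P : Set G) (θ : G → X → X) : Type _ :=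
  {q : X × G // q.2 ∈ Qset P θ q.1}

/-- `θ` is a right injective action of the subsemigroup `P` of `G = P P⁻¹`, and `u x g` is the
point `u(x, g)` it determines for `g ∈ Q_x`. -/
structure IsRightInjectiveAction {G X : Type*} [Group G] (P : Set G) (θ : G → X → X)
    (u : X → G → X) : Prop where
  one_mem : (1 : G) ∈ P
  mul_mem : ∀ a ∈ P, ∀ b ∈ P, a * b ∈ P
  exists_eq_mul_inv : ∀ g : G, ∃ a ∈ P, ∃ b ∈ P, g = a * b⁻¹
  injective : ∀ a ∈ P, Injective (θ a)
  map_map : ∀ a ∈ P, ∀ b ∈ P, ∀ x : X, θ a (θ b x) = θ (b * a) x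
  map_u : ∀ x : X, ∀ g ∈ Qset P θ x, ∀ a ∈ P, ∀ b ∈ P, g = a * b⁻¹ → θ a x = θ b (u x g)

namespace IsRightInjectiveAction

variable {G X : Type*} [Group G] {P : Set G} {θ : G → X → X} {u : X → G → X}
  {x y : X} {g h c d : G}

theorem one_mem_Qset (hθ : IsRightInjectiveAction P θ u) (x : X) : (1 : G) ∈ Qset P θ x :=
  ⟨1, hθ.one_mem, 1, hθ.one_mem, x, by group, rfl⟩

theorem u_eq_of_map_eq (hθ : IsRightInjectiveAction P θ u) (hg : g ∈ Qset P θ x) (hc : c ∈ P)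
    (hd : d ∈ P) (hcd : g = c * d⁻¹) (h : θ c x = θ d y) : u x g = y :=
  hθ.injective d hd ((hθ.map_u x g hg c hc d hd hcd).symm.trans h)

theorem exists_map_eq_u (hθ : IsRightInjectiveAction P θ u) (hg : g ∈ Qset P θ x) :
    ∃ c ∈ P, ∃ d ∈ P, g = c * d⁻¹ ∧ θ c x = θ d (u x g) := by
  obtain ⟨c, hc, d, hd, _, hcd, _⟩ := id hg
  exact ⟨c, hc, d, hd, hcd, hθ.map_u x g hg c hc d hd hcd⟩

theorem u_one (hθ : IsRightInjectiveAction P θ u) (x : X) : u x 1 = x :=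
  hθ.u_eq_of_map_eq (hθ.one_mem_Qset x) hθ.one_mem hθ.one_mem (by group) rfl

theorem inv_mem_Qset (hθ : IsRightInjectiveAction P θ u) (hg : g ∈ Qset P θ x) :
    g⁻¹ ∈ Qset P θ (u x g) := by
  obtain ⟨c, hc, d, hd, hcd, heq⟩ := hθ.exists_map_eq_u hg
  exact ⟨d, hd, c, hc, x, by rw [hcd]; group, heq.symm⟩

theorem u_u_inv (hθ : IsRightInjectiveAction P θ u) (hg : g ∈ Qset P θ x) :
    u (u x g) g⁻¹ = x := by
  obtain ⟨c, hc, d, hd, hcd, heq⟩ := hθ.exists_map_eq_u hg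
  exact hθ.u_eq_of_map_eq (hθ.inv_mem_Qset hg) hd hc (by rw [hcd]; group) heq.symm

/-- The Ore condition `G = P P⁻¹` lets us write `d⁻¹ c' = p q⁻¹` and compose the two witnesses
`θ_c x = θ_d (u x g)` and `θ_{c'} (u x g) = θ_{d'} (u (u x g) h)` after applying `θ_p`, `θ_q`. -/
theorem exists_map_eq_u_u (hθ : IsRightInjectiveAction P θ u) (hg : g ∈ Qset P θ x)
    (hh : h ∈ Qset P θ (u x g)) :
    ∃ c ∈ P, ∃ d ∈ P, g * h = c * d⁻¹ ∧ θ c x = θ d (u (u x g) h) := by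
  obtain ⟨c, hc, d, hd, hcd, heq⟩ := hθ.exists_map_eq_u hg
  obtain ⟨c', hc', d', hd', hcd', heq'⟩ := hθ.exists_map_eq_u hh
  obtain ⟨p, hp, q, hq, hpq⟩ := hθ.exists_eq_mul_inv (d⁻¹ * c')
  have hdp : d * p = c' * q := by
    rw [← mul_inv_eq_iff_eq_mul, mul_assoc, ← hpq]; group
  refine ⟨c * p, hθ.mul_mem c hc p hp, d' * q, hθ.mul_mem d' hd' q hq, ?_, ?_⟩
  · rw [hcd, hcd', show c * d⁻¹ * (c' * d'⁻¹) = c * (d⁻¹ * c') * d'⁻¹ by group, hpq]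
    group
  calc θ (c * p) x = θ p (θ c x) := (hθ.map_map p hp c hc x).symm
    _ = θ p (θ d (u x g)) := by rw [heq]
    _ = θ q (θ c' (u x g)) := by rw [hθ.map_map p hp d hd, hdp, hθ.map_map q hq c' hc']
    _ = θ q (θ d' (u (u x g) h)) := by rw [heq']
    _ = θ (d' * q) (u (u x g) h) := hθ.map_map q hq d' hd' _

theorem mul_mem_Qset (hθ : IsRightInjectiveAction P θ u) (hg : g ∈ Qset P θ x)
    (hh : h ∈ Qset P θ (u x g)) : g * h ∈ Qset P θ x := by
  obtain ⟨c, hc, d, hd, hcd, heq⟩ := hθ.exists_map_eq_u_u hg hh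
  exact ⟨c, hc, d, hd, _, hcd, heq⟩

theorem u_mul (hθ : IsRightInjectiveAction P θ u) (hg : g ∈ Qset P θ x)
    (hh : h ∈ Qset P θ (u x g)) : u x (g * h) = u (u x g) h := by
  obtain ⟨c, hc, d, hd, hcd, heq⟩ := hθ.exists_map_eq_u_u hg hh
  exact hθ.u_eq_of_map_eq (hθ.mul_mem_Qset hg hh) hc hd hcd heq

variable [TopologicalSpace X]

theorem eq_of_eventually_u_eq (hθ : IsRightInjectiveAction P θ u)
    (hfree : Dense {x : X | ∀ g ∈ Qset P θ x, g ≠ 1 → u x g ≠ x}) {g' : G}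
    (h : ∀ᶠ x' in 𝓝 x, g ∈ Qset P θ x' ∧ g' ∈ Qset P θ x' ∧ u x' g = u x' g') : g = g' := by
  obtain ⟨x₀, hfree₀, hg, hg', hu⟩ := hfree.inter_nhds_nonempty h
  have hinv : g'⁻¹ ∈ Qset P θ (u x₀ g) := hu ▸ hθ.inv_mem_Qset hg'
  have hfix : u x₀ (g * g'⁻¹) = x₀ := by
    rw [hθ.u_mul hg hinv, hu, hθ.u_u_inv hg']
  by_contra hne
  exact hfree₀ _ (hθ.mul_mem_Qset hg hinv) (mt mul_inv_eq_one.mp hne) hfix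

end IsRightInjectiveAction

section Topology

variable {G X : Type*} [Group G] [TopologicalSpace X] {P : Set G} {θ : G → X → X}
  {x : X} {g : G}

theorem eventually_mem_Qset (hθc : ∀ a ∈ P, Continuous (θ a))
    (hθopen : ∀ a ∈ P, IsOpen (Set.range (θ a))) (hg : g ∈ Qset P θ x) :
    ∀ᶠ x' in 𝓝 x, g ∈ Qset P θ x' := by
  obtain ⟨c, hc, d, hd, y, hcd, heq⟩ := hg
  filter_upwards [(hθc c hc).continuousAt.preimage_mem_nhds
    ((hθopen d hd).mem_nhds ⟨y, heq.symm⟩)] with x' ⟨y', hy'⟩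
  exact ⟨c, hc, d, hd, y', hcd, hy'.symm⟩

theorem IsRightInjectiveAction.tendsto_u [CompactSpace X] [T2Space X] {u : X → G → X}
    (hθ : IsRightInjectiveAction P θ u) (hθc : ∀ a ∈ P, Continuous (θ a))
    (hθopen : ∀ a ∈ P, IsOpen (Set.range (θ a))) (hg : g ∈ Qset P θ x) :
    Tendsto (fun x' => u x' g) (𝓝 x) (𝓝 (u x g)) := by
  obtain ⟨c, hc, d, hd, hcd, heq⟩ := hθ.exists_map_eq_u hg
  rw [((hθc d hd).isClosedEmbedding (hθ.injective d hd)).tendsto_nhds_iff, ← heq]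
  refine (hθc c hc).continuousAt.congr' ?_
  filter_upwards [eventually_mem_Qset hθc hθopen hg] with x' hx'
  exact hθ.map_u x' g hx' c hc d hd hcd

theorem TransformationGroupoid.eventually_apply_eq [TopologicalSpace G] [DiscreteTopology G]
    {Z : Type*} [TopologicalSpace Z] [DiscreteTopology Z] {f : TransformationGroupoid P θ → Z}
    (hf : Continuous f) (hg : g ∈ Qset P θ x) :
    ∀ᶠ x' in 𝓝 x, ∀ hg' : g ∈ Qset P θ x', f ⟨(x', g), hg'⟩ = f ⟨(x, g), hg⟩ := by
  have hconst : ∀ᶠ p in 𝓝 (⟨(x, g), hg⟩ : TransformationGroupoid P θ), f p = f ⟨(x, g), hg⟩ :=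
    hf.continuousAt (isOpen_discrete {f ⟨(x, g), hg⟩} |>.mem_nhds rfl)
  rw [nhds_subtype_eq_comap, eventually_comap, nhds_prod_eq, nhds_discrete G, prod_pure,
    eventually_map] at hconst
  filter_upwards [hconst] with x' hx' hg'
  exact hx' ⟨(x', g), hg'⟩ rfl

end Topology

section OrbitEquivalence

variable {G H X Y : Type*} [Group G] [Group H] [TopologicalSpace G] [TopologicalSpace H]
  [TopologicalSpace X] [TopologicalSpace Y]
  {P : Set G} {S : Set H} {θ : G → X → X} {ρ : H → Y → Y} {u : X → G → X} {v : Y → H → Y}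

def orbitMap (φ : X ≃ₜ Y) (a : TransformationGroupoid P θ → H)
    (ha : ∀ p : TransformationGroupoid P θ, a p ∈ Qset S ρ (φ p.1.1)) :
    TransformationGroupoid P θ → TransformationGroupoid S ρ :=
  fun p => ⟨(φ p.1.1, a p), ha p⟩

theorem continuous_orbitMap (φ : X ≃ₜ Y) {a : TransformationGroupoid P θ → H}
    (hacont : Continuous a) (ha : ∀ p : TransformationGroupoid P θ, a p ∈ Qset S ρ (φ p.1.1)) :
    Continuous (orbitMap φ a ha) :=
  ((φ.continuous.comp (continuous_fst.comp continuous_subtype_val)).prodMk hacont).subtype_mk _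

theorem leftInverse_orbitMap [DiscreteTopology G] (hθ : IsRightInjectiveAction P θ u)
    (hθc : ∀ a ∈ P, Continuous (θ a)) (hθopen : ∀ a ∈ P, IsOpen (Set.range (θ a)))
    (hfree : Dense {x : X | ∀ g ∈ Qset P θ x, g ≠ 1 → u x g ≠ x}) (φ : X ≃ₜ Y)
    {a : TransformationGroupoid P θ → H} {b : TransformationGroupoid S ρ → G}
    (hacont : Continuous a) (hbcont : Continuous b)
    (ha : ∀ p : TransformationGroupoid P θ,
      a p ∈ Qset S ρ (φ p.1.1) ∧ φ (u p.1.1 p.1.2) = v (φ p.1.1) (a p))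
    (hb : ∀ q : TransformationGroupoid S ρ,
      b q ∈ Qset P θ (φ.symm q.1.1) ∧ φ.symm (v q.1.1 q.1.2) = u (φ.symm q.1.1) (b q)) :
    LeftInverse (orbitMap φ.symm b fun q => (hb q).1) (orbitMap φ a fun p => (ha p).1) := by
  rintro ⟨⟨x, g⟩, hg⟩
  set Λ := orbitMap φ a fun p => (ha p).1
  refine Subtype.ext (Prod.ext (φ.symm_apply_apply x) ?_)
  change b (Λ ⟨(x, g), hg⟩) = g
  refine (hθ.eq_of_eventually_u_eq (x := x) hfree ?_).symm
  filter_upwards [eventually_mem_Qset hθc hθopen hg, TransformationGroupoid.eventually_apply_eq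
    (hbcont.comp (continuous_orbitMap φ hacont fun p => (ha p).1)) hg] with x' hgx' hbx'
  set p' : TransformationGroupoid P θ := ⟨(x', g), hgx'⟩
  obtain ⟨hmem, heq⟩ : b (Λ p') ∈ Qset P θ (φ.symm (φ x')) ∧
      φ.symm (v (φ x') (a p')) = u (φ.symm (φ x')) (b (Λ p')) := hb (Λ p')
  have hbx : b (Λ p') = b (Λ ⟨(x, g), hg⟩) := hbx' hgx'
  rw [φ.symm_apply_apply, hbx] at hmem
  rw [φ.symm_apply_apply, ← (ha p').2, φ.symm_apply_apply, hbx] at heq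
  exact ⟨hgx', hmem, heq⟩

theorem cocycle_map_one [DiscreteTopology G] [DiscreteTopology H]
    (hθ : IsRightInjectiveAction P θ u) (hρ : IsRightInjectiveAction S ρ v)
    (hfree : Dense {y : Y | ∀ h ∈ Qset S ρ y, h ≠ 1 → v y h ≠ y}) (φ : X ≃ₜ Y)
    {a : TransformationGroupoid P θ → H} (hacont : Continuous a)
    (ha : ∀ p : TransformationGroupoid P θ,
      a p ∈ Qset S ρ (φ p.1.1) ∧ φ (u p.1.1 p.1.2) = v (φ p.1.1) (a p))
    {x : X} (hx : (1 : G) ∈ Qset P θ x) : a ⟨(x, 1), hx⟩ = 1 := by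
  refine hρ.eq_of_eventually_u_eq (x := φ x) hfree ?_
  rw [← φ.map_nhds_eq, eventually_map]
  filter_upwards [TransformationGroupoid.eventually_apply_eq hacont hx] with x' hax'
  have hx' := hθ.one_mem_Qset x'
  obtain ⟨hmem, heq⟩ := ha ⟨(x', 1), hx'⟩
  rw [hax' hx'] at hmem heq
  refine ⟨hmem, hρ.one_mem_Qset _, ?_⟩
  rw [hρ.u_one, ← heq, hθ.u_one]

theorem cocycle_map_mul [DiscreteTopology G] [DiscreteTopology H] [CompactSpace X] [T2Space X]
    (hθ : IsRightInjectiveAction P θ u) (hθc : ∀ a ∈ P, Continuous (θ a))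
    (hθopen : ∀ a ∈ P, IsOpen (Set.range (θ a))) (hρ : IsRightInjectiveAction S ρ v)
    (hfree : Dense {y : Y | ∀ h ∈ Qset S ρ y, h ≠ 1 → v y h ≠ y}) (φ : X ≃ₜ Y)
    {a : TransformationGroupoid P θ → H} (hacont : Continuous a)
    (ha : ∀ p : TransformationGroupoid P θ,
      a p ∈ Qset S ρ (φ p.1.1) ∧ φ (u p.1.1 p.1.2) = v (φ p.1.1) (a p))
    {x : X} {g h : G} (hg : g ∈ Qset P θ x) (hh : h ∈ Qset P θ (u x g))
    (hgh : g * h ∈ Qset P θ x) :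
    a ⟨(x, g * h), hgh⟩ = a ⟨(x, g), hg⟩ * a ⟨(u x g, h), hh⟩ := by
  refine hρ.eq_of_eventually_u_eq (x := φ x) hfree ?_
  rw [← φ.map_nhds_eq, eventually_map]
  have hnear : ∀ᶠ x' in 𝓝 x, h ∈ Qset P θ (u x' g) ∧
      ∀ hh' : h ∈ Qset P θ (u x' g), a ⟨(u x' g, h), hh'⟩ = a ⟨(u x g, h), hh⟩ :=
    hθ.tendsto_u hθc hθopen hg |>.eventually <| (eventually_mem_Qset hθc hθopen hh).and
      (TransformationGroupoid.eventually_apply_eq hacont hh)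
  filter_upwards [eventually_mem_Qset hθc hθopen hg, hnear,
    TransformationGroupoid.eventually_apply_eq hacont hg,
    TransformationGroupoid.eventually_apply_eq hacont hgh] with x' hgx' ⟨hhx', hahx'⟩ hagx' hahgx'
  have hghx' := hθ.mul_mem_Qset hgx' hhx'
  obtain ⟨hmem_g, heq_g⟩ := ha ⟨(x', g), hgx'⟩
  obtain ⟨hmem_h, heq_h⟩ := ha ⟨(u x' g, h), hhx'⟩
  obtain ⟨hmem_gh, heq_gh⟩ := ha ⟨(x', g * h), hghx'⟩
  rw [hagx' hgx'] at hmem_g heq_g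
  rw [hahx' hhx', heq_g] at hmem_h
  rw [hahx' hhx'] at heq_h
  rw [hahgx' hghx'] at hmem_gh heq_gh
  refine ⟨hmem_gh, hρ.mul_mem_Qset hmem_g hmem_h, ?_⟩
  rw [hρ.u_mul hmem_g hmem_h, ← heq_g, ← heq_h, ← heq_gh, hθ.u_mul hgx' hhx']

end OrbitEquivalence

theorem stmt_12_general {G H : Type*} [Group G] [Group H]
    [TopologicalSpace G] [DiscreteTopology G] [TopologicalSpace H] [DiscreteTopology H]
    {X Y : Type*} [TopologicalSpace X] [CompactSpace X] [T2Space X]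
    [TopologicalSpace Y]
    (P : Set G) (hP1 : (1 : G) ∈ P) (hPmul : ∀ a ∈ P, ∀ b ∈ P, a * b ∈ P)
    (hPG : ∀ g : G, ∃ a ∈ P, ∃ b ∈ P, g = a * b⁻¹)
    (S : Set H) (hS1 : (1 : H) ∈ S) (hSmul : ∀ a ∈ S, ∀ b ∈ S, a * b ∈ S)
    (hSH : ∀ h : H, ∃ a ∈ S, ∃ b ∈ S, h = a * b⁻¹)
    (θ : G → X → X)
    (hθc : ∀ a ∈ P, Continuous (θ a))
    (hθi : ∀ a ∈ P, Function.Injective (θ a))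
    (hθm : ∀ a ∈ P, ∀ b ∈ P, ∀ x : X, θ a (θ b x) = θ (b * a) x)
    (hθopen : ∀ a ∈ P, IsOpen (Set.range (θ a)))
    (ρ : H → Y → Y)
    (hρc : ∀ s ∈ S, Continuous (ρ s))
    (hρi : ∀ s ∈ S, Function.Injective (ρ s))
    (hρm : ∀ a ∈ S, ∀ b ∈ S, ∀ y : Y, ρ a (ρ b y) = ρ (b * a) y)
    (hρopen : ∀ s ∈ S, IsOpen (Set.range (ρ s)))
    (u : X → G → X)
    (hu : ∀ x : X, ∀ g ∈ Qset P θ x, ∀ a ∈ P, ∀ b ∈ P,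
      g = a * b⁻¹ → θ a x = θ b (u x g))
    (v : Y → H → Y)
    (hv : ∀ y : Y, ∀ h ∈ Qset S ρ y, ∀ a ∈ S, ∀ b ∈ S,
      h = a * b⁻¹ → ρ a y = ρ b (v y h))
    (hfreeX : Dense {x : X | ∀ g ∈ Qset P θ x, g ≠ 1 → u x g ≠ x})
    (hfreeY : Dense {y : Y | ∀ h ∈ Qset S ρ y, h ≠ 1 → v y h ≠ y})
    (φ : X ≃ₜ Y)
    (a : {q : X × G // q.2 ∈ Qset P θ q.1} → H)
    (b : {q : Y × H // q.2 ∈ Qset S ρ q.1} → G)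
    (hacont : Continuous a) (hbcont : Continuous b)
    (ha : ∀ p : {q : X × G // q.2 ∈ Qset P θ q.1},
      a p ∈ Qset S ρ (φ p.1.1) ∧ φ (u p.1.1 p.1.2) = v (φ p.1.1) (a p))
    (hb : ∀ q : {q : Y × H // q.2 ∈ Qset S ρ q.1},
      b q ∈ Qset P θ (φ.symm q.1.1) ∧ φ.symm (v q.1.1 q.1.2) = u (φ.symm q.1.1) (b q)) :
    (∃ Λ : {q : X × G // q.2 ∈ Qset P θ q.1} ≃ₜ {q : Y × H // q.2 ∈ Qset S ρ q.1},
      (∀ p : {q : X × G // q.2 ∈ Qset P θ q.1}, (Λ p : Y × H) = (φ p.1.1, a p)) ∧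
      (∀ q : {q : Y × H // q.2 ∈ Qset S ρ q.1},
        (Λ.symm q : X × G) = (φ.symm q.1.1, b q))) ∧
    (∀ (x : X) (hx : (1 : G) ∈ Qset P θ x), a ⟨(x, 1), hx⟩ = 1) ∧
    (∀ (x : X) (g h : G) (h1 : g ∈ Qset P θ x) (h2 : h ∈ Qset P θ (u x g))
      (h3 : g * h ∈ Qset P θ x),
      φ (u x g) = v (φ x) (a ⟨(x, g), h1⟩) ∧
      a ⟨(x, g * h), h3⟩ = a ⟨(x, g), h1⟩ * a ⟨(u x g, h), h2⟩) := by
  have hθ : IsRightInjectiveAction P θ u := ⟨hP1, hPmul, hPG, hθi, hθm, hu⟩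
  have hρ : IsRightInjectiveAction S ρ v := ⟨hS1, hSmul, hSH, hρi, hρm, hv⟩
  refine ⟨⟨⟨⟨orbitMap φ a fun p => (ha p).1, orbitMap φ.symm b fun q => (hb q).1,
      leftInverse_orbitMap hθ hθc hθopen hfreeX φ hacont hbcont ha hb,
      leftInverse_orbitMap hρ hρc hρopen hfreeY φ.symm hbcont hacont hb ha⟩,
      continuous_orbitMap φ hacont _, continuous_orbitMap φ.symm hbcont _⟩,
    fun _ => rfl, fun _ => rfl⟩,
    fun x hx => cocycle_map_one hθ hρ hfreeY φ hacont ha hx,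
    fun x g h hg hh hgh =>
      ⟨(ha ⟨(x, g), hg⟩).2, cocycle_map_mul hθ hθc hθopen hρ hfreeY φ hacont ha hg hh hgh⟩⟩

/-- for topologically free injective actions that are continuously orbit
equivalent via `(φ, a, b)`, the map `Λ(x, g) = (φ(x), a(x, g))` is a homeomorphism
`X ⋊ P ≃ₜ Y ⋊ S` with inverse `(y, h) ↦ (φ⁻¹(y), b(y, h))`, mapping the unit space onto
the unit space (`a(x, e) = e`) and multiplicative on composable pairs; i.e. `X ⋊ P` and
`Y ⋊ S` are isomorphic as étale topological groupoids. -/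
theorem stmt_12 {G H : Type*} [Group G] [Countable G] [Group H] [Countable H]
    [TopologicalSpace G] [DiscreteTopology G] [TopologicalSpace H] [DiscreteTopology H]
    {X Y : Type*} [TopologicalSpace X] [CompactSpace X] [T2Space X]
    [SecondCountableTopology X]
    [TopologicalSpace Y] [CompactSpace Y] [T2Space Y] [SecondCountableTopology Y]
    (P : Set G) (hP1 : (1 : G) ∈ P) (hPmul : ∀ a ∈ P, ∀ b ∈ P, a * b ∈ P)
    (hPG : ∀ g : G, ∃ a ∈ P, ∃ b ∈ P, g = a * b⁻¹)
    (S : Set H) (hS1 : (1 : H) ∈ S) (hSmul : ∀ a ∈ S, ∀ b ∈ S, a * b ∈ S)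
    (hSH : ∀ h : H, ∃ a ∈ S, ∃ b ∈ S, h = a * b⁻¹)
    (θ : G → X → X)
    (hθc : ∀ a ∈ P, Continuous (θ a))
    (hθi : ∀ a ∈ P, Function.Injective (θ a))
    (hθ1 : θ 1 = id)
    (hθm : ∀ a ∈ P, ∀ b ∈ P, ∀ x : X, θ a (θ b x) = θ (b * a) x)
    (hθopen : ∀ a ∈ P, IsOpen (Set.range (θ a)))
    (ρ : H → Y → Y)
    (hρc : ∀ s ∈ S, Continuous (ρ s))
    (hρi : ∀ s ∈ S, Function.Injective (ρ s))
    (hρ1 : ρ 1 = id)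
    (hρm : ∀ a ∈ S, ∀ b ∈ S, ∀ y : Y, ρ a (ρ b y) = ρ (b * a) y)
    (hρopen : ∀ s ∈ S, IsOpen (Set.range (ρ s)))
    (u : X → G → X)
    (hu : ∀ x : X, ∀ g ∈ Qset P θ x, ∀ a ∈ P, ∀ b ∈ P,
      g = a * b⁻¹ → θ a x = θ b (u x g))
    (v : Y → H → Y)
    (hv : ∀ y : Y, ∀ h ∈ Qset S ρ y, ∀ a ∈ S, ∀ b ∈ S,
      h = a * b⁻¹ → ρ a y = ρ b (v y h))
    (hfreeX : Dense {x : X | ∀ g ∈ Qset P θ x, g ≠ 1 → u x g ≠ x})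
    (hfreeY : Dense {y : Y | ∀ h ∈ Qset S ρ y, h ≠ 1 → v y h ≠ y})
    (φ : X ≃ₜ Y)
    (a : {q : X × G // q.2 ∈ Qset P θ q.1} → H)
    (b : {q : Y × H // q.2 ∈ Qset S ρ q.1} → G)
    (hacont : Continuous a) (hbcont : Continuous b)
    (ha : ∀ p : {q : X × G // q.2 ∈ Qset P θ q.1},
      a p ∈ Qset S ρ (φ p.1.1) ∧ φ (u p.1.1 p.1.2) = v (φ p.1.1) (a p))
    (hb : ∀ q : {q : Y × H // q.2 ∈ Qset S ρ q.1},
      b q ∈ Qset P θ (φ.symm q.1.1) ∧ φ.symm (v q.1.1 q.1.2) = u (φ.symm q.1.1) (b q)) :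
    (∃ Λ : {q : X × G // q.2 ∈ Qset P θ q.1} ≃ₜ {q : Y × H // q.2 ∈ Qset S ρ q.1},
      (∀ p : {q : X × G // q.2 ∈ Qset P θ q.1}, (Λ p : Y × H) = (φ p.1.1, a p)) ∧
      (∀ q : {q : Y × H // q.2 ∈ Qset S ρ q.1},
        (Λ.symm q : X × G) = (φ.symm q.1.1, b q))) ∧
    (∀ (x : X) (hx : (1 : G) ∈ Qset P θ x), a ⟨(x, 1), hx⟩ = 1) ∧
    (∀ (x : X) (g h : G) (h1 : g ∈ Qset P θ x) (h2 : h ∈ Qset P θ (u x g))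
      (h3 : g * h ∈ Qset P θ x),
      φ (u x g) = v (φ x) (a ⟨(x, g), h1⟩) ∧
      a ⟨(x, g * h), h3⟩ = a ⟨(x, g), h1⟩ * a ⟨(u x g, h), h2⟩) :=
  stmt_12_general P hP1 hPmul hPG S hS1 hSmul hSH θ hθc hθi hθm hθopen ρ hρc hρi hρm hρopen u hu v
    hv hfreeX hfreeY φ a b hacont hbcont ha hb
end
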